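/- arXiv:2008.05801 — 5 statements merged into one kernel-verified Lean document; each statement's English description precedes it below -/
import Mathlib

section
/- Let k ≥ 2 and let G be the caterpillar graph on n = 2k vertices: V(G) = {u_1,...,u_k, w_1,...,w_k} with edges {u_i, u_{i+1}} for 1 ≤ i ≤ k−1 and {u_i, w_i} for 1 ≤ i ≤ k. Then any set F of unordered vertex pairs for which (V(G), E(G) △ F) is Hamiltonian satisfies |F| ≥ n/4; in particular, with degree bound d = 3, G is (1/13)-far from being Hamiltonian. -/
open SimpleGraph

variable {V : Type*}

/-- The closed neighbourhood `N_G(S) = S ∪ {v : v adjacent to some w ∈ S}`. -/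
def closedNbhd (G : SimpleGraph V) (S : Set V) : Set V :=
  S ∪ {v | ∃ w ∈ S, G.Adj v w}

/-- `G` has maximum degree at most `d`. -/
def MaxDegLE (G : SimpleGraph V) (d : ℕ) : Prop :=
  ∀ v, (G.neighborSet v).ncard ≤ d

/-- `G` is `ε`-far from being Hamiltonian (w.r.t. the degree bound `d`):
modifying at most `ε·d·|V|` edges cannot make `G` Hamiltonian. -/
def FarFromHamiltonian [Fintype V] [DecidableEq V] (G : SimpleGraph V) (d : ℕ) (ε : ℝ) : Prop :=
  ∀ F : Finset (Sym2 V), (∀ e ∈ F, ¬ e.IsDiag) →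
    (F.card : ℝ) ≤ ε * d * (Fintype.card V) →
    ¬ (SimpleGraph.fromEdgeSet (symmDiff G.edgeSet (↑F : Set (Sym2 V)))).IsHamiltonian

/-- `G` is `δ`-locally Hamiltonian on the class `C`: for every `S` with `|S| ≤ δ·|V|`
there is a Hamiltonian `H ∈ C` (on the same vertex set, hence of the same order),
a set `T`, and an isomorphism `G[N_G(S)] ≅ H[N_H(T)]` mapping `S` onto `T`. -/
def LocallyHamiltonian [Fintype V] [DecidableEq V] (C : SimpleGraph V → Prop) (δ : ℝ)
    (G : SimpleGraph V) : Prop :=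
  ∀ S : Set V, (S.ncard : ℝ) ≤ δ * (Fintype.card V) →
    ∃ H : SimpleGraph V, C H ∧ H.IsHamiltonian ∧ ∃ T : Set V,
      ∃ φ : (SimpleGraph.induce (closedNbhd G S) G) ≃g (SimpleGraph.induce (closedNbhd H T) H),
        ∀ x : closedNbhd G S, (x : V) ∈ S ↔ ((φ x : V) ∈ T)

/-- `S` witnesses non-Hamiltonicity of `G` among graphs of maximum degree at most `d`:
no Hamiltonian graph `H` of the same order with degree bound `d` admits a set `T` and an
isomorphism `G[N_G(S)] ≅ H[N_H(T)]` mapping `S` onto `T`. -/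
def WitnessesNonHamiltonicity [Fintype V] [DecidableEq V] (G : SimpleGraph V) (d : ℕ)
    (S : Set V) : Prop :=
  ∀ H : SimpleGraph V, H.IsHamiltonian → MaxDegLE H d → ∀ T : Set V,
    ¬ ∃ φ : (SimpleGraph.induce (closedNbhd G S) G) ≃g (SimpleGraph.induce (closedNbhd H T) H),
        ∀ x : closedNbhd G S, (x : V) ∈ S ↔ ((φ x : V) ∈ T)

/-- `E` is `d`-regular. -/
def IsRegularDeg (E : SimpleGraph V) (d : ℕ) : Prop :=
  ∀ v, (E.neighborSet v).ncard = d

/-- The arcs of the directed graph `→E` obtained by replacing each edge by two arcs. -/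
abbrev Arc (E : SimpleGraph V) : Type _ := {p : V × V // E.Adj p.1 p.2}

instance arcDecPred [Fintype V] (E : SimpleGraph V) [DecidableRel E.Adj] :
    DecidablePred (fun p : V × V => E.Adj p.1 p.2) := fun p => ‹DecidableRel E.Adj› p.1 p.2

/-- The vertex set of `G_E`: 31 `a`-vertices per arc and 6 `b`-vertices per vertex. -/
abbrev GEVert (E : SimpleGraph V) : Type _ := (Arc E × Fin 31) ⊕ (V × Fin 6)

/-- For `1 ≤ j ≤ 31`, the vertex `a_j^e` of `G_E`. -/
def aV {E : SimpleGraph V} (e : Arc E) (j : ℕ) : GEVert E :=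
  Sum.inl (e, ⟨(j - 1) % 31, by omega⟩)

/-- For `1 ≤ k ≤ 6`, the vertex `b_k^v` of `G_E`. -/
def bV (E : SimpleGraph V) (v : V) (k : ℕ) : GEVert E :=
  Sum.inr (v, ⟨(k - 1) % 6, by omega⟩)

/-- Adjacency (with 1-based indices) inside the gadget `P(v_1,…,v_31)` (unsymmetrised):
`{v_i, v_{i+1}}` for `1 ≤ i ≤ 30`, `{v_j, v_{j+3}}` for `j ∈ {2,27}`, and
`{v_k, v_{k+5}}` for `k ∈ {6,12,15,21}`. -/
def gadgetRel (i j : ℕ) : Prop :=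
  (1 ≤ i ∧ i ≤ 30 ∧ j = i + 1) ∨
  ((i = 2 ∧ j = 5) ∨ (i = 27 ∧ j = 30) ∨ (i = 6 ∧ j = 11) ∨ (i = 12 ∧ j = 17) ∨
    (i = 15 ∧ j = 20) ∨ (i = 21 ∧ j = 26))

/-- The generating relation for the edges of `G_E`: the gadget edges, the cyclic edges given by
the linear order `f` on arcs, and the link edges (a link from the gadget of an arc `e = (u,v)`
to the gadget of an arc `e' = (v,w)` via `b_1^v,…,b_6^v`). -/
def GERel [Fintype V] (E : SimpleGraph V) [DecidableRel E.Adj]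
    (f : Arc E ≃ Fin (Fintype.card (Arc E))) (x y : GEVert E) : Prop :=
  (∃ (e : Arc E) (i j : ℕ), gadgetRel i j ∧ x = aV e i ∧ y = aV e j) ∨
  (∃ e e' : Arc E, (f e').val = ((f e).val + 1) % (Fintype.card (Arc E)) ∧
      x = aV e 31 ∧ y = aV e' 1) ∨
  (∃ e e' : Arc E, e.1.2 = e'.1.1 ∧
    ((x = aV e 23 ∧ y = aV e' 3) ∨ (x = aV e 18 ∧ y = aV e' 8) ∨
     (x = aV e 29 ∧ y = aV e' 9) ∨ (x = aV e 24 ∧ y = aV e' 14) ∨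
     (x = aV e' 5 ∧ y = bV E e.1.2 1) ∨ (x = bV E e.1.2 1 ∧ y = bV E e.1.2 2) ∨
     (x = bV E e.1.2 2 ∧ y = bV E e.1.2 3) ∨ (x = bV E e.1.2 3 ∧ y = aV e 23) ∨
     (x = aV e 24 ∧ y = bV E e.1.2 4) ∨ (x = bV E e.1.2 4 ∧ y = bV E e.1.2 5) ∨
     (x = bV E e.1.2 5 ∧ y = bV E e.1.2 6) ∨ (x = bV E e.1.2 6 ∧ y = aV e' 12)))

/-- The graph `G_E` of the construction. -/
def GE [Fintype V] (E : SimpleGraph V) [DecidableRel E.Adj]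
    (f : Arc E ≃ Fin (Fintype.card (Arc E))) : SimpleGraph (GEVert E) :=
  SimpleGraph.fromRel (GERel E f)

/-- The list `L` of vertices is a subpath of the closed walk `C`, i.e. it appears (forwards or
reversed) as a sequence of consecutive vertices of `C` (cyclically). -/
def IsSubpath {W : Type*} (G : SimpleGraph W) {x : W} (C : G.Walk x x) (L : List W) : Prop :=
  (∃ i : ℕ, ∀ (j : ℕ) (h : j < L.length), L.get ⟨j, h⟩ = C.getVert ((i + j) % C.length)) ∨
  (∃ i : ℕ, ∀ (j : ℕ) (h : j < L.reverse.length),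
      L.reverse.get ⟨j, h⟩ = C.getVert ((i + j) % C.length))

/-- The expansion ratio of `E` is at least `1`: every nonempty `S` with `|S| ≤ |V|/2` has at
least `|S|` boundary edges. -/
def ExpansionGeOne [Fintype V] (E : SimpleGraph V) : Prop :=
  ∀ S : Set V, S.Nonempty → 2 * S.ncard ≤ Fintype.card V →
    S.ncard ≤ {p : Sym2 V | p ∈ E.edgeSet ∧ ∃ x ∈ S, ∃ y, y ∉ S ∧ p = s(x, y)}.ncard

/-- The caterpillar graph on `2k` vertices: a path `u_1 — ⋯ — u_k` (the `inl` vertices),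
where each `u_i` has a pendant vertex `w_i` (the `inr` vertices). -/
def caterpillar (k : ℕ) : SimpleGraph (Fin k ⊕ Fin k) :=
  SimpleGraph.fromRel (fun x y =>
    (∃ i j : Fin k, x = Sum.inl i ∧ y = Sum.inl j ∧ (j : ℕ) = (i : ℕ) + 1) ∨
    (∃ i : Fin k, x = Sum.inl i ∧ y = Sum.inr i))

/-! A Hamiltonian cycle through a pendant vertex `w_i` needs a second edge at `w_i`, and that edge
lies in `F`. So every pendant vertex is an endpoint of an edge of `F`; as each edge has at most two
endpoints, the `k = n/2` pendant vertices force `|F| ≥ k/2 = n/4`. -/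

open Finset
open scoped symmDiff

namespace SimpleGraph

variable {W : Type*} {G : SimpleGraph W}

lemma adj_of_fromEdgeSet_symmDiff_adj {F : Set (Sym2 W)} {v x : W}
    (h : (fromEdgeSet (G.edgeSet ∆ F)).Adj v x) (hvx : s(v, x) ∉ F) : G.Adj v x := by
  rw [fromEdgeSet_adj, Set.mem_symmDiff] at h
  tauto

variable [Fintype W] [DecidableEq W]

lemma IsHamiltonian.exists_adj_adj_ne [Nontrivial W] (hG : G.IsHamiltonian) (v : W) :
    ∃ x y, G.Adj v x ∧ G.Adj v y ∧ x ≠ y := by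
  obtain ⟨p, hp⟩ := hG.exists_isHamiltonianCycle v
  have hnil := hp.isCycle.not_nil
  exact ⟨p.snd, p.penultimate, p.adj_snd hnil, (p.adj_penultimate hnil).symm,
    hp.isCycle.snd_ne_penultimate⟩

lemma IsHamiltonian.exists_mem_of_symmDiff {F : Set (Sym2 W)} {u v : W} (huv : u ≠ v)
    (hv : ∀ x, G.Adj v x → x = u) (hH : (fromEdgeSet (G.edgeSet ∆ F)).IsHamiltonian) :
    ∃ e ∈ F, v ∈ e := by
  have := nontrivial_of_ne u v huv
  obtain ⟨x, y, hx, hy, hxy⟩ := hH.exists_adj_adj_ne v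
  by_contra! hF
  have hxF : s(v, x) ∉ F := fun h => hF _ h (Sym2.mem_mk_left v x)
  have hyF : s(v, y) ∉ F := fun h => hF _ h (Sym2.mem_mk_left v y)
  exact hxy ((hv x (adj_of_fromEdgeSet_symmDiff_adj hx hxF)).trans
    (hv y (adj_of_fromEdgeSet_symmDiff_adj hy hyF)).symm)

end SimpleGraph

lemma Finset.card_le_two_mul_card_of_forall_exists_mem {W : Type*} [DecidableEq W]
    {S : Finset W} {F : Finset (Sym2 W)} (h : ∀ v ∈ S, ∃ e ∈ F, v ∈ e) :
    #S ≤ 2 * #F := by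
  calc #S ≤ #(F.biUnion Sym2.toFinset) := by
        refine card_le_card fun v hv => ?_
        obtain ⟨e, he, hve⟩ := h v hv
        exact mem_biUnion.mpr ⟨e, he, Sym2.mem_toFinset.mpr hve⟩
    _ ≤ #F * 2 := card_biUnion_le_card_mul _ _ _ fun e _ => by
        rw [Sym2.card_toFinset]; split_ifs <;> omega
    _ = 2 * #F := Nat.mul_comm _ _

lemma caterpillar_adj_inr {k : ℕ} {i : Fin k} {x : Fin k ⊕ Fin k}
    (h : (caterpillar k).Adj (Sum.inr i) x) : x = Sum.inl i := by
  simp only [caterpillar, fromRel_adj] at h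
  aesop

lemma caterpillar_card_le_of_isHamiltonian_symmDiff {k : ℕ} (F : Finset (Sym2 (Fin k ⊕ Fin k)))
    (hH : (fromEdgeSet ((caterpillar k).edgeSet ∆ ↑F)).IsHamiltonian) : k ≤ 2 * #F := by
  have hcover : ∀ v ∈ (univ : Finset (Fin k)).map .inr, ∃ e ∈ F, v ∈ e := by
    simp only [mem_map, mem_univ, true_and, forall_exists_index, forall_apply_eq_imp_iff]
    exact fun i => hH.exists_mem_of_symmDiff Sum.inl_ne_inr (fun _ => caterpillar_adj_inr)
  simpa using card_le_two_mul_card_of_forall_exists_mem hcover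

/-- For `k ≥ 2`, any edge-modification set `F` making the caterpillar on
`n = 2k` vertices Hamiltonian satisfies `|F| ≥ n/4`; in particular, with degree bound `3`,
the caterpillar is `(1/13)`-far from being Hamiltonian. -/
theorem stmt4 (k : ℕ) (hk : 2 ≤ k) :
    (∀ F : Finset (Sym2 (Fin k ⊕ Fin k)), (∀ e ∈ F, ¬ e.IsDiag) →
      (SimpleGraph.fromEdgeSet
        (symmDiff (caterpillar k).edgeSet (↑F : Set (Sym2 (Fin k ⊕ Fin k))))).IsHamiltonian →
      ((2 * k : ℝ)) / 4 ≤ (F.card : ℝ)) ∧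
    FarFromHamiltonian (caterpillar k) 3 (1 / 13) := by
  have hbound : ∀ F : Finset (Sym2 (Fin k ⊕ Fin k)),
      (fromEdgeSet ((caterpillar k).edgeSet ∆ ↑F)).IsHamiltonian → (k : ℝ) ≤ 2 * #F :=
    fun F hH => by exact_mod_cast caterpillar_card_le_of_isHamiltonian_symmDiff F hH
  refine ⟨fun F _ hH => by linarith [hbound F hH], fun F _ hcard hH => ?_⟩
  have hk' : (2 : ℝ) ≤ k := by exact_mod_cast hk
  simp only [Fintype.card_sum, Fintype.card_fin, Nat.cast_add] at hcard
  linarith [hbound F hH]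
end

section
/- Let k ≥ 2 and let H be the graph on n = 4k vertices consisting of k four-cycles arranged in a cycle: V(H) = {x_{i,j} : i ∈ ℤ_k, j ∈ {1,2,3,4}} with edges {x_{i,j}, x_{i,j+1 mod 4}} for all i ∈ ℤ_k and j ∈ {1,2,3,4}, together with edges {x_{i,3}, x_{i+1,1}} for all i ∈ ℤ_k. Then any set F of unordered vertex pairs for which (V(H), E(H) △ F) is Hamiltonian satisfies |F| ≥ n/8; in particular, with degree bound d = 3, H is (1/25)-far from being Hamiltonian. -/
open SimpleGraph

variable {V : Type*}

/-- The graph on `4k` vertices consisting of `k` four-cycles arranged in a cycle: vertex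
`(i, j)` is the `(j+1)`-st vertex of the `i`-th four-cycle; consecutive vertices of each
four-cycle are adjacent (cyclically in `j`), and the third vertex of the `i`-th four-cycle is
adjacent to the first vertex of the `(i+1 mod k)`-th four-cycle. -/
def ringOfC4 (k : ℕ) : SimpleGraph (Fin k × Fin 4) :=
  SimpleGraph.fromRel (fun x y =>
    (x.1 = y.1 ∧ ((y.2 : ℕ) = ((x.2 : ℕ) + 1) % 4)) ∨
    ((x.2 : ℕ) = 2 ∧ (y.2 : ℕ) = 0 ∧ (y.1 : ℕ) = ((x.1 : ℕ) + 1) % k))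


/- ### Auxiliary lemmas -/

lemma getVert_eq_support_getElem {W : Type*} {G : SimpleGraph W} {u v : W} (p : G.Walk u v) :
    ∀ (i : ℕ) (h : i < p.support.length), p.getVert i = p.support[i] := by
  induction p with
  | nil => intro i h; simp at h; subst h; simp
  | cons hadj q ih =>
    intro i h
    cases i with
    | zero => simp
    | succ n =>
      simp only [Walk.getVert_cons_succ, Walk.support_cons, List.getElem_cons_succ]
      exact ih n (by simpa [Walk.support_cons] using h)

lemma cycle_getVert_inj {W : Type*} {G : SimpleGraph W} {x : W} {C : G.Walk x x}
    (hC : C.IsCycle) {a b : ℕ} (ha : a < C.length) (hb : b < C.length)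
    (h : C.getVert a = C.getVert b) : a = b := by
  have h3 := hC.three_le_length
  have slen : C.support.length = C.length + 1 := Walk.length_support C
  have tlen : C.support.tail.length = C.length := by simp [slen]
  have hd : ∀ (m : ℕ) (hm : m < C.support.tail.length),
      C.support.tail[m] = C.getVert (m+1) := by
    intro m hm
    rw [List.getElem_tail, ← getVert_eq_support_getElem _ _ (by omega)]
  have key : ∀ (c : ℕ), c < C.length → ∃ (hlt : (if c = 0 then C.length else c) - 1 < C.support.tail.length),
      C.support.tail[(if c = 0 then C.length else c) - 1] = C.getVert c := by
    intro c hc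
    split
    · next hcz =>
      subst hcz
      refine ⟨by omega, ?_⟩
      rw [hd _ (by omega)]
      have h1 : C.length - 1 + 1 = C.length := by omega
      rw [h1, Walk.getVert_length, Walk.getVert_zero]
    · next hcz =>
      refine ⟨by omega, ?_⟩
      rw [hd _ (by omega)]
      congr 1
      omega
  obtain ⟨ba, ka⟩ := key a ha
  obtain ⟨bb, kb⟩ := key b hb
  have heq : (if a = 0 then C.length else a) - 1 = (if b = 0 then C.length else b) - 1 := by
    apply (List.Nodup.getElem_inj_iff hC.support_nodup).mp
    rw [ka, kb, h]
  split at heq <;> split at heq <;> omega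


lemma ringOfC4_adj_odd (k : ℕ) (i : Fin k) (j : Fin 4) (hj : (j:ℕ) = 1 ∨ (j:ℕ) = 3)
    (y : Fin k × Fin 4) :
    (ringOfC4 k).Adj (i, j) y ↔ (y = (i, 0) ∨ y = (i, 2)) := by
  obtain ⟨y1, y2⟩ := y
  have h4 : (j:ℕ) < 4 := j.isLt
  have h4' : (y2:ℕ) < 4 := y2.isLt
  simp only [ringOfC4, SimpleGraph.fromRel_adj, Prod.mk.injEq, ne_eq, Prod.ext_iff,
    Fin.ext_iff, not_and]
  constructor
  · rintro ⟨hne, (⟨h1, h2⟩ | ⟨h1, h2, h3⟩) | (⟨h1, h2⟩ | ⟨h1, h2, h3⟩)⟩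
    · rcases hj with hj | hj
      · right; exact ⟨h1.symm, by omega⟩
      · left; exact ⟨h1.symm, by omega⟩
    · exact absurd h1 (by omega)
    · rcases hj with hj | hj
      · left; exact ⟨h1, by omega⟩
      · right; exact ⟨h1, by omega⟩
    · exact absurd h2 (by omega)
  · rintro (⟨h1, h2⟩ | ⟨h1, h2⟩)
    · refine ⟨fun _ => by omega, ?_⟩
      rcases hj with hj | hj
      · exact Or.inr (Or.inl ⟨h1, by omega⟩)
      · exact Or.inl (Or.inl ⟨h1.symm, by omega⟩)
    · refine ⟨fun _ => by omega, ?_⟩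
      rcases hj with hj | hj
      · exact Or.inl (Or.inl ⟨h1.symm, by omega⟩)
      · exact Or.inr (Or.inl ⟨h1, by omega⟩)

lemma stmt5_aux (k : ℕ) (hk : 2 ≤ k) :
    (∀ F : Finset (Sym2 (Fin k × Fin 4)), (∀ e ∈ F, ¬ e.IsDiag) →
      (SimpleGraph.fromEdgeSet
        (symmDiff (ringOfC4 k).edgeSet (↑F : Set (Sym2 (Fin k × Fin 4))))).IsHamiltonian →
      ((4 * k : ℝ)) / 8 ≤ (F.card : ℝ)) := by
  have hcard : Fintype.card (Fin k × Fin 4) = 4 * k := by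
    simp [mul_comm]
  intro F hdiag hham
  set G' := SimpleGraph.fromEdgeSet
      (symmDiff (ringOfC4 k).edgeSet (↑F : Set (Sym2 (Fin k × Fin 4)))) with hG'
  have claim : ∀ i : Fin k, ∃ e ∈ F, ∃ v, v ∈ e ∧ v.1 = i := by
    intro i
    haveI : NeZero k := ⟨by omega⟩
    by_contra hcon
    push_neg at hcon
    obtain ⟨x, C, hC⟩ := hham (by rw [hcard]; omega)
    have hL : C.length = 4 * k := hC.length_eq.trans hcard
    set L := C.length with hLdef
    have hL8 : 8 ≤ L := by omega
    set gv : ℕ → Fin k × Fin 4 := fun p => C.getVert (p % L) with hgv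
    have hmodlt : ∀ p : ℕ, p % L < L := fun p => Nat.mod_lt _ (by omega)
    have hmodeq : ∀ a b : ℕ, a % L = b % L → gv a = gv b := by
      intro a b h
      show C.getVert (a % L) = C.getVert (b % L)
      rw [h]
    have hperiod : ∀ q : ℕ, gv (q + L) = gv q :=
      fun q => hmodeq _ _ (Nat.add_mod_right q L)
    have hadj : ∀ p : ℕ, G'.Adj (gv p) (gv (p + 1)) := by
      intro p
      have h1 := C.adj_getVert_succ (hmodlt p)
      have h2 : C.getVert (p % L + 1) = gv (p + 1) := by
        have hme : (p + 1) % L = (p % L + 1) % L :=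
          Nat.ModEq.add_right 1 (Nat.mod_modEq p L).symm
        show _ = C.getVert ((p + 1) % L)
        rw [hme]
        rcases Nat.lt_or_ge (p % L + 1) L with h | h
        · rw [Nat.mod_eq_of_lt h]
        · have hE : p % L + 1 = L := by have := hmodlt p; omega
          rw [hE, Nat.mod_self, Walk.getVert_length, Walk.getVert_zero]
      rw [← h2]
      exact h1
    have hinj : ∀ a b : ℕ, gv a = gv b → a % L = b % L := by
      intro a b h
      exact cycle_getVert_inj hC.isCycle (hmodlt a) (hmodlt b) h
    have hsurj : ∀ v : Fin k × Fin 4, ∃ p, p < L ∧ gv p = v := by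
      intro v
      obtain ⟨n, hn, hnle⟩ := Walk.mem_support_iff_exists_getVert.mp (hC.mem_support v)
      rcases Nat.lt_or_ge n L with h | h
      · exact ⟨n, h, by show C.getVert (n % L) = v; rw [Nat.mod_eq_of_lt h]; exact hn⟩
      · have hnL : n = L := by omega
        refine ⟨0, by omega, ?_⟩
        show C.getVert (0 % L) = v
        rw [Nat.zero_mod, ← hn, hnL, Walk.getVert_length, Walk.getVert_zero]
    have hnbr : ∀ (j : Fin 4), ((j:ℕ) = 1 ∨ (j:ℕ) = 3) → ∀ y,
        G'.Adj (i, j) y ↔ (y = (i, 0) ∨ y = (i, 2)) := by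
      intro j hj y
      have hmem : s((i, j), y) ∉ (↑F : Set (Sym2 (Fin k × Fin 4))) := by
        intro hmem
        exact hcon _ hmem (i, j) (Sym2.mem_mk_left _ _) rfl
      rw [hG', SimpleGraph.fromEdgeSet_adj, Set.mem_symmDiff]
      constructor
      · rintro ⟨h | h, hne⟩
        · exact (ringOfC4_adj_odd k i j hj y).mp ((SimpleGraph.mem_edgeSet _).mp h.1)
        · exact absurd h.1 hmem
      · intro h
        have hadj' := (ringOfC4_adj_odd k i j hj y).mpr h
        exact ⟨Or.inl ⟨(SimpleGraph.mem_edgeSet _).mpr hadj', hmem⟩, hadj'.ne⟩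
    have hforce : ∀ (j : Fin 4), ((j:ℕ) = 1 ∨ (j:ℕ) = 3) → ∀ q, gv q = (i, j) →
        (gv (q+1) = (i,0) ∧ gv (q+L-1) = (i,2)) ∨
        (gv (q+1) = (i,2) ∧ gv (q+L-1) = (i,0)) := by
      intro j hj q hq
      have a1 : G'.Adj (i, j) (gv (q+1)) := hq ▸ hadj q
      have e1 : q + L - 1 + 1 = q + L := by omega
      have a2' : G'.Adj (gv (q+L-1)) (gv (q+L)) := by
        have := hadj (q+L-1); rwa [e1] at this
      have a2 : G'.Adj (i, j) (gv (q+L-1)) := by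
        rw [hperiod q, hq] at a2'
        exact a2'.symm
      have hne12 : gv (q+1) ≠ gv (q+L-1) := by
        intro hcontra
        have hme := hinj _ _ hcontra
        have hdvd : L ∣ (q+L-1) - (q+1) := (Nat.modEq_iff_dvd' (by omega)).mp hme
        have he2 : (q+L-1) - (q+1) = L - 2 := by omega
        rw [he2] at hdvd
        have := Nat.le_of_dvd (by omega) hdvd
        omega
      have m1 := (hnbr j hj _).mp a1
      have m2 := (hnbr j hj _).mp a2
      rcases m1 with m1 | m1 <;> rcases m2 with m2 | m2
      · exact absurd (m1.trans m2.symm) hne12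
      · exact Or.inl ⟨m1, m2⟩
      · exact Or.inr ⟨m1, m2⟩
      · exact absurd (m1.trans m2.symm) hne12
    have hcomp : ∀ (j : Fin 4), ((j:ℕ) = 1 ∨ (j:ℕ) = 3) → ∀ p,
        (gv p = (i,0) ∨ gv p = (i,2)) → gv (p+1) = (i,j) ∨ gv (p+L-1) = (i,j) := by
      intro j hj p hp
      obtain ⟨q, hqL, hq⟩ := hsurj (i, j)
      have hq' : gv (q + L) = (i, j) := by rw [hperiod]; exact hq
      have move : ∀ a b : ℕ, gv a = gv b → gv (a + L - 1) = gv (b + L - 1) ∧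
          gv (a + 1) = gv (b + 1) := by
        intro a b h
        have hme : a % L = b % L := hinj _ _ h
        constructor
        · have h2 : (a + (L-1)) % L = (b + (L-1)) % L := Nat.ModEq.add_right (L-1) hme
          rw [show a + (L-1) = a + L - 1 by omega, show b + (L-1) = b + L - 1 by omega] at h2
          exact hmodeq _ _ h2
        · exact hmodeq _ _ (Nat.ModEq.add_right 1 hme)
      rcases hforce j hj q hq with ⟨h1, h2⟩ | ⟨h1, h2⟩
      · rcases hp with hp | hp
        · -- gv p = (i,0) = gv (q+1); then gv (p+L-1) = gv (q+1+L-1) = gv (q+L) = (i,j)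
          have := (move p (q+1) (hp.trans h1.symm)).1
          rw [show q+1+L-1 = q+L by omega] at this
          exact Or.inr (this.trans hq')
        · have := (move p (q+L-1) (hp.trans h2.symm)).2
          rw [show q+L-1+1 = q+L by omega] at this
          exact Or.inl (this.trans hq')
      · rcases hp with hp | hp
        · have := (move p (q+L-1) (hp.trans h2.symm)).2
          rw [show q+L-1+1 = q+L by omega] at this
          exact Or.inl (this.trans hq')
        · have := (move p (q+1) (hp.trans h1.symm)).1
          rw [show q+1+L-1 = q+L by omega] at this
          exact Or.inr (this.trans hq')
    have h13 : ((i, (1:Fin 4)) : Fin k × Fin 4) ≠ (i, 3) := by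
      simp [Prod.ext_iff]
    have hstep : ∀ p, (gv p).1 = i → (gv (p+1)).1 = i := by
      intro p hp
      have hw2 : gv p = (i, (gv p).2) := by
        rw [← hp]
      have h42 : ((gv p).2 : ℕ) < 4 := (gv p).2.isLt
      have hcases : ((gv p).2 : ℕ) = 0 ∨ ((gv p).2 : ℕ) = 1 ∨ ((gv p).2 : ℕ) = 2 ∨
          ((gv p).2 : ℕ) = 3 := by omega
      have hcomp0 : (gv p = (i,0) ∨ gv p = (i,2)) → (gv (p+1)).1 = i := by
        intro hp02
        have h1 := hcomp 1 (Or.inl rfl) p hp02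
        have h3 := hcomp 3 (Or.inr rfl) p hp02
        rcases h1 with h1 | h1
        · rw [h1]
        · rcases h3 with h3 | h3
          · rw [h3]
          · exact absurd (h1.symm.trans h3) h13
      rcases hcases with h | h | h | h
      · exact hcomp0 (Or.inl (by rw [hw2]; congr 1; exact Fin.ext h))
      · rcases hforce (gv p).2 (Or.inl h) p hw2 with ⟨hh, _⟩ | ⟨hh, _⟩ <;> rw [hh]
      · exact hcomp0 (Or.inr (by rw [hw2]; congr 1; exact Fin.ext h))
      · rcases hforce (gv p).2 (Or.inr h) p hw2 with ⟨hh, _⟩ | ⟨hh, _⟩ <;> rw [hh]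
    obtain ⟨q0, hq0L, hq0⟩ := hsurj (i, (0 : Fin 4))
    have hind : ∀ m, (gv (q0 + m)).1 = i := by
      intro m
      induction m with
      | zero => rw [Nat.add_zero, hq0]
      | succ n ih => exact hstep (q0 + n) ih
    obtain ⟨q1, hq1L, hq1⟩ := hsurj ((i + 1 : Fin k), (0 : Fin 4))
    have hkey : gv q1 = gv (q0 + (q1 + L - q0)) := by
      rw [show q0 + (q1 + L - q0) = q1 + L by omega, hperiod]
    have hbad : (i + 1 : Fin k) = i := by
      have h2 := hind (q1 + L - q0)
      rw [← hkey, hq1] at h2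
      exact h2
    have h10 : (1 : Fin k) = 0 := by
      apply add_left_cancel (a := i)
      rw [add_zero]
      exact hbad
    have hv1 : ((1 : Fin k) : ℕ) = 1 % k := Fin.val_one' k
    rw [h10] at hv1
    simp only [Fin.val_zero] at hv1
    rw [Nat.mod_eq_of_lt (by omega)] at hv1
    exact absurd hv1 (by omega)
  -- counting
  choose g hgF hg using claim
  have hcount : k ≤ 2 * F.card := by
    have h1 : (Finset.univ : Finset (Fin k)).card ≤
        2 * ((Finset.univ : Finset (Fin k)).image g).card := by
      apply Finset.card_le_mul_card_image
      intro e he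
      obtain ⟨⟨a, b⟩, rfl⟩ := e.exists_rep
      have hsub : (Finset.univ.filter (fun i => g i = Quot.mk _ (a, b))) ⊆ {a.1, b.1} := by
        intro i hi
        rw [Finset.mem_filter] at hi
        obtain ⟨v, hv1, hv2⟩ := hg i
        rw [hi.2] at hv1
        have : v = a ∨ v = b := Sym2.mem_iff.mp hv1
        rcases this with rfl | rfl
        · rw [← hv2]; exact Finset.mem_insert_self _ _
        · rw [← hv2]; exact Finset.mem_insert_of_mem (Finset.mem_singleton_self _)
      calc (Finset.univ.filter (fun i => g i = Quot.mk _ (a, b))).card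
          ≤ ({a.1, b.1} : Finset (Fin k)).card := Finset.card_le_card hsub
        _ ≤ 2 := (Finset.card_insert_le _ _).trans (by simp)
    have h2 : ((Finset.univ : Finset (Fin k)).image g).card ≤ F.card := by
      apply Finset.card_le_card
      intro e he
      rw [Finset.mem_image] at he
      obtain ⟨j, _, rfl⟩ := he
      exact hgF j
    have h3 : (Finset.univ : Finset (Fin k)).card = k := by simp
    omega
  have hc : (k : ℝ) ≤ 2 * (F.card : ℝ) := by exact_mod_cast hcount
  linarith

/-- For `k ≥ 2`, any edge-modification set `F` making the cycle of `k`
four-cycles on `n = 4k` vertices Hamiltonian satisfies `|F| ≥ n/8`; in particular, with degree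
bound `3`, this graph is `(1/25)`-far from being Hamiltonian. -/
theorem stmt5 (k : ℕ) (hk : 2 ≤ k) :
    (∀ F : Finset (Sym2 (Fin k × Fin 4)), (∀ e ∈ F, ¬ e.IsDiag) →
      (SimpleGraph.fromEdgeSet
        (symmDiff (ringOfC4 k).edgeSet (↑F : Set (Sym2 (Fin k × Fin 4))))).IsHamiltonian →
      ((4 * k : ℝ)) / 8 ≤ (F.card : ℝ)) ∧
    FarFromHamiltonian (ringOfC4 k) 3 (1 / 25) := by
  refine ⟨stmt5_aux k hk, ?_⟩
  intro F hd hcardle hham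
  have h1 := stmt5_aux k hk F hd hham
  have h2 : (Fintype.card (Fin k × Fin 4) : ℕ) = 4 * k := by simp [mul_comm]
  rw [h2] at hcardle
  push_cast at hcardle
  have hk' : (2:ℝ) ≤ (k:ℝ) := by exact_mod_cast hk
  linarith
end

section
/- Let d ≥ 1 and let E be a d-regular graph on n vertices. Then the graph G_E of the construction has maximum degree at most d+3 and exactly (6+31d)·n vertices. -/
open SimpleGraph

variable {V : Type*}

section AuxStmt6

instance gadgetRelDec : ∀ i j, Decidable (gadgetRel i j) := fun i j => by
  unfold gadgetRel; infer_instance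

lemma gadgetRel_bounds {i j : ℕ} (h : gadgetRel i j) :
    1 ≤ i ∧ i ≤ 30 ∧ 2 ≤ j ∧ j ≤ 31 := by
  unfold gadgetRel at h; omega

/-- indices of gadget neighbours of index `m` -/
def gadgetNbrs (m : ℕ) : Finset ℕ :=
  (Finset.range 32).filter (fun j => gadgetRel m j ∨ gadgetRel j m)

lemma gadgetNbrs_card_arc :
    ∀ m ∈ ([3,8,9,14,18,23,24,29] : List ℕ), (gadgetNbrs m).card ≤ 2 := by decide

lemma gadgetNbrs_card_all : ∀ m < 32, (gadgetNbrs m).card ≤ 3 := by decide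

lemma succ_mod_inj {N a b : ℕ} (ha : a < N) (hb : b < N)
    (h : (a + 1) % N = (b + 1) % N) : a = b := by
  rcases Nat.lt_or_ge (a + 1) N with h1 | h1
  · rw [Nat.mod_eq_of_lt h1] at h
    rcases Nat.lt_or_ge (b + 1) N with h2 | h2
    · rw [Nat.mod_eq_of_lt h2] at h; omega
    · have hb1 : b + 1 = N := by omega
      rw [hb1, Nat.mod_self] at h; omega
  · have ha1 : a + 1 = N := by omega
    rcases Nat.lt_or_ge (b + 1) N with h2 | h2
    · rw [ha1, Nat.mod_self, Nat.mod_eq_of_lt h2] at h; omega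
    · omega

variable {V : Type*} [Fintype V] [DecidableEq V] (E : SimpleGraph V) [DecidableRel E.Adj]

/-- a-vertices at index `k` of arcs leaving `v`. -/
def outS (v : V) (k : ℕ) : Set (GEVert E) := {y | ∃ e : Arc E, e.1.1 = v ∧ y = aV e k}

/-- a-vertices at index `k` of arcs entering `v`. -/
def inS (v : V) (k : ℕ) : Set (GEVert E) := {y | ∃ e : Arc E, e.1.2 = v ∧ y = aV e k}

lemma ncard_outArcs (v : V) :
    {e : Arc E | e.1.1 = v}.ncard = (E.neighborSet v).ncard := by
  have himg : (fun e : Arc E => e.1.2) '' {e : Arc E | e.1.1 = v} = E.neighborSet v := by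
    ext w
    constructor
    · rintro ⟨e, he, rfl⟩
      have h2 := e.2
      rw [he] at h2
      exact h2
    · intro hw
      exact ⟨⟨(v, w), hw⟩, rfl, rfl⟩
  rw [← himg]
  refine (Set.ncard_image_of_injOn ?_).symm
  rintro ⟨⟨a, b⟩, hab⟩ he ⟨⟨c, dd⟩, hcd⟩ he' h
  simp only [Set.mem_setOf_eq] at he he'
  simp_all

lemma ncard_inArcs (v : V) :
    {e : Arc E | e.1.2 = v}.ncard = (E.neighborSet v).ncard := by
  have himg : (fun e : Arc E => e.1.1) '' {e : Arc E | e.1.2 = v} = E.neighborSet v := by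
    ext w
    constructor
    · rintro ⟨e, he, rfl⟩
      have h2 := e.2
      rw [he] at h2
      exact h2.symm
    · intro hw
      exact ⟨⟨(w, v), hw.symm⟩, rfl, rfl⟩
  rw [← himg]
  refine (Set.ncard_image_of_injOn ?_).symm
  rintro ⟨⟨a, b⟩, hab⟩ he ⟨⟨c, dd⟩, hcd⟩ he' h
  simp only [Set.mem_setOf_eq] at he he'
  simp_all

lemma ncard_outS (v : V) (k : ℕ) :
    (outS E v k).ncard ≤ (E.neighborSet v).ncard := by
  have : outS E v k = (fun e : Arc E => aV e k) '' {e : Arc E | e.1.1 = v} := by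
    ext y
    constructor
    · rintro ⟨e, he, rfl⟩; exact ⟨e, he, rfl⟩
    · rintro ⟨e, he, rfl⟩; exact ⟨e, he, rfl⟩
  rw [this, ← ncard_outArcs E v]
  exact Set.ncard_image_le (Set.toFinite _)

lemma ncard_inS (v : V) (k : ℕ) :
    (inS E v k).ncard ≤ (E.neighborSet v).ncard := by
  have : inS E v k = (fun e : Arc E => aV e k) '' {e : Arc E | e.1.2 = v} := by
    ext y
    constructor
    · rintro ⟨e, he, rfl⟩; exact ⟨e, he, rfl⟩
    · rintro ⟨e, he, rfl⟩; exact ⟨e, he, rfl⟩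
  rw [this, ← ncard_inArcs E v]
  exact Set.ncard_image_le (Set.toFinite _)

variable (f : Arc E ≃ Fin (Fintype.card (Arc E)))

/-- local sporadic neighbours of `a_m` -/
def aB (e₀ : Arc E) (m : ℕ) : Set (GEVert E) :=
  if m = 5 then {bV E e₀.1.1 1}
  else if m = 12 then {bV E e₀.1.1 6}
  else if m = 23 then {bV E e₀.1.2 3}
  else if m = 24 then {bV E e₀.1.2 4}
  else if m = 31 then
    {y | ∃ e', (f e').val = ((f e₀).val + 1) % (Fintype.card (Arc E)) ∧ y = aV e' 1}
  else if m = 1 then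
    {y | ∃ e', (f e₀).val = ((f e').val + 1) % (Fintype.card (Arc E)) ∧ y = aV e' 31}
  else ∅

/-- arc-indexed neighbours of `a_m` -/
def aA (e₀ : Arc E) (m : ℕ) : Set (GEVert E) :=
  if m = 3 then inS E e₀.1.1 23
  else if m = 8 then inS E e₀.1.1 18
  else if m = 9 then inS E e₀.1.1 29
  else if m = 14 then inS E e₀.1.1 24
  else if m = 18 then outS E e₀.1.2 8
  else if m = 23 then outS E e₀.1.2 3
  else if m = 29 then outS E e₀.1.2 9
  else if m = 24 then outS E e₀.1.2 14
  else ∅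

def aSupp (e₀ : Arc E) (m : ℕ) : Set (GEVert E) :=
  (aV e₀ '' ↑(gadgetNbrs m)) ∪ aB E f e₀ m ∪ aA E e₀ m

def bLoc (v : V) (c : ℕ) : Set (GEVert E) :=
  if c = 1 then {bV E v 2}
  else if c = 2 then {bV E v 1, bV E v 3}
  else if c = 3 then {bV E v 2}
  else if c = 4 then {bV E v 5}
  else if c = 5 then {bV E v 4, bV E v 6}
  else {bV E v 5}

def bArc (v : V) (c : ℕ) : Set (GEVert E) :=
  if c = 1 then outS E v 5
  else if c = 3 then inS E v 23
  else if c = 4 then inS E v 24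
  else if c = 6 then outS E v 12
  else ∅

def bSupp (v : V) (c : ℕ) : Set (GEVert E) := bLoc E v c ∪ bArc E v c

def supp (x : GEVert E) : Set (GEVert E) :=
  Sum.elim (fun p => aSupp E f p.1 (p.2.val + 1)) (fun p => bSupp E p.1 (p.2.val + 1)) x

lemma supp_aV (e : Arc E) (i : ℕ) (h1 : 1 ≤ i) (h2 : i ≤ 31) :
    supp E f (aV e i) = aSupp E f e i := by
  show aSupp E f e ((i - 1) % 31 + 1) = aSupp E f e i
  rw [show (i - 1) % 31 + 1 = i by omega]

lemma supp_bV (v : V) (c : ℕ) (h1 : 1 ≤ c) (h2 : c ≤ 6) :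
    supp E f (bV E v c) = bSupp E v c := by
  show bSupp E v ((c - 1) % 6 + 1) = bSupp E v c
  rw [show (c - 1) % 6 + 1 = c by omega]

lemma mem_gadget_image {e : Arc E} {i j : ℕ} (h : gadgetRel i j ∨ gadgetRel j i) :
    (aV e j : GEVert E) ∈ aV e '' ↑(gadgetNbrs i) := by
  refine ⟨j, ?_, rfl⟩
  have hb : j < 32 := by
    rcases h with h | h <;> have := gadgetRel_bounds h <;> omega
  simp only [Finset.coe_filter, gadgetNbrs, Set.mem_setOf_eq, Finset.mem_range]
  exact ⟨hb, h⟩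

lemma rel_mem_supp {x y : GEVert E} (h : GERel E f x y) :
    y ∈ supp E f x ∧ x ∈ supp E f y := by
  rcases h with ⟨e, i, j, hrel, rfl, rfl⟩ | ⟨e, e', hf, rfl, rfl⟩ | ⟨e, e', he, hc⟩
  · -- gadget edges
    obtain ⟨hi1, hi2, hj1, hj2⟩ := gadgetRel_bounds hrel
    rw [supp_aV E f e i hi1 (by omega), supp_aV E f e j (by omega) hj2]
    constructor
    · exact Or.inl (Or.inl (mem_gadget_image E (Or.inl hrel)))
    · exact Or.inl (Or.inl (mem_gadget_image E (Or.inr hrel)))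
  · -- cyclic edges
    rw [supp_aV E f e 31 (by omega) (by omega), supp_aV E f e' 1 (by omega) (by omega)]
    constructor
    · refine Or.inl (Or.inr ?_)
      simp only [aB, reduceIte]
      exact ⟨e', hf, rfl⟩
    · refine Or.inl (Or.inr ?_)
      simp only [aB, reduceIte]
      exact ⟨e, hf, rfl⟩
  · -- link edges
    rcases hc with ⟨rfl, rfl⟩ | ⟨rfl, rfl⟩ | ⟨rfl, rfl⟩ | ⟨rfl, rfl⟩ | ⟨rfl, rfl⟩ | ⟨rfl, rfl⟩ |
      ⟨rfl, rfl⟩ | ⟨rfl, rfl⟩ | ⟨rfl, rfl⟩ | ⟨rfl, rfl⟩ | ⟨rfl, rfl⟩ | ⟨rfl, rfl⟩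
    · -- a23 -- a3
      rw [supp_aV E f e 23 (by omega) (by omega), supp_aV E f e' 3 (by omega) (by omega)]
      constructor
      · refine Or.inr ?_
        simp only [aA, reduceIte]
        exact ⟨e', he.symm, rfl⟩
      · refine Or.inr ?_
        simp only [aA, reduceIte]
        exact ⟨e, he, rfl⟩
    · -- a18 -- a8
      rw [supp_aV E f e 18 (by omega) (by omega), supp_aV E f e' 8 (by omega) (by omega)]
      constructor
      · refine Or.inr ?_
        simp only [aA, reduceIte]
        exact ⟨e', he.symm, rfl⟩
      · refine Or.inr ?_
        simp only [aA, reduceIte]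
        exact ⟨e, he, rfl⟩
    · -- a29 -- a9
      rw [supp_aV E f e 29 (by omega) (by omega), supp_aV E f e' 9 (by omega) (by omega)]
      constructor
      · refine Or.inr ?_
        simp only [aA, reduceIte]
        exact ⟨e', he.symm, rfl⟩
      · refine Or.inr ?_
        simp only [aA, reduceIte]
        exact ⟨e, he, rfl⟩
    · -- a24 -- a14
      rw [supp_aV E f e 24 (by omega) (by omega), supp_aV E f e' 14 (by omega) (by omega)]
      constructor
      · refine Or.inr ?_
        simp only [aA, reduceIte]
        exact ⟨e', he.symm, rfl⟩
      · refine Or.inr ?_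
        simp only [aA, reduceIte]
        exact ⟨e, he, rfl⟩
    · -- a5' -- b1
      rw [supp_aV E f e' 5 (by omega) (by omega), supp_bV E f e.1.2 1 (by omega) (by omega)]
      constructor
      · refine Or.inl (Or.inr ?_)
        simp only [aB, reduceIte]
        rw [he]
        rfl
      · refine Or.inr ?_
        simp only [bArc, reduceIte]
        exact ⟨e', he.symm, rfl⟩
    · -- b1 -- b2
      rw [supp_bV E f e.1.2 1 (by omega) (by omega), supp_bV E f e.1.2 2 (by omega) (by omega)]
      constructor
      · exact Or.inl (by simp only [bLoc, reduceIte]; rfl)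
      · exact Or.inl (by simp only [bLoc, reduceIte]; exact Or.inl rfl)
    · -- b2 -- b3
      rw [supp_bV E f e.1.2 2 (by omega) (by omega), supp_bV E f e.1.2 3 (by omega) (by omega)]
      constructor
      · exact Or.inl (by simp only [bLoc, reduceIte]; exact Or.inr rfl)
      · exact Or.inl (by simp only [bLoc, reduceIte]; rfl)
    · -- b3 -- a23
      rw [supp_bV E f e.1.2 3 (by omega) (by omega), supp_aV E f e 23 (by omega) (by omega)]
      constructor
      · refine Or.inr ?_
        simp only [bArc, reduceIte]
        exact ⟨e, rfl, rfl⟩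
      · refine Or.inl (Or.inr ?_)
        simp only [aB, reduceIte]
        rfl
    · -- a24 -- b4
      rw [supp_aV E f e 24 (by omega) (by omega), supp_bV E f e.1.2 4 (by omega) (by omega)]
      constructor
      · refine Or.inl (Or.inr ?_)
        simp only [aB, reduceIte]
        rfl
      · refine Or.inr ?_
        simp only [bArc, reduceIte]
        exact ⟨e, rfl, rfl⟩
    · -- b4 -- b5
      rw [supp_bV E f e.1.2 4 (by omega) (by omega), supp_bV E f e.1.2 5 (by omega) (by omega)]
      constructor
      · exact Or.inl (by simp only [bLoc, reduceIte]; rfl)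
      · exact Or.inl (by simp only [bLoc, reduceIte]; exact Or.inl rfl)
    · -- b5 -- b6
      rw [supp_bV E f e.1.2 5 (by omega) (by omega), supp_bV E f e.1.2 6 (by omega) (by omega)]
      constructor
      · exact Or.inl (by simp only [bLoc, reduceIte]; exact Or.inr rfl)
      · exact Or.inl (by simp only [bLoc, reduceIte]; rfl)
    · -- b6 -- a12'
      rw [supp_bV E f e.1.2 6 (by omega) (by omega), supp_aV E f e' 12 (by omega) (by omega)]
      constructor
      · refine Or.inr ?_
        simp only [bArc, reduceIte]
        exact ⟨e', he.symm, rfl⟩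
      · refine Or.inl (Or.inr ?_)
        simp only [aB, reduceIte]
        rw [he]
        rfl

lemma ncard_aB_le (e₀ : Arc E) (m : ℕ) : (aB E f e₀ m).ncard ≤ 1 := by
  unfold aB
  split_ifs
  · simp
  · simp
  · simp
  · simp
  · refine (Set.ncard_le_one (Set.toFinite _)).mpr ?_
    rintro a ⟨ea, hfa, rfl⟩ b ⟨eb, hfb, rfl⟩
    have : ea = eb := f.injective (Fin.ext (hfa.trans hfb.symm))
    rw [this]
  · refine (Set.ncard_le_one (Set.toFinite _)).mpr ?_
    rintro a ⟨ea, hfa, rfl⟩ b ⟨eb, hfb, rfl⟩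
    have : (f ea).val = (f eb).val :=
      succ_mod_inj (f ea).isLt (f eb).isLt (hfa.symm.trans hfb)
    have : ea = eb := f.injective (Fin.ext this)
    rw [this]
  · simp

lemma ncard_aA_le {d : ℕ} (hreg : IsRegularDeg E d) (e₀ : Arc E) (m : ℕ) :
    (aA E e₀ m).ncard ≤ d := by
  unfold aA
  split_ifs
  · exact le_trans (ncard_inS E _ _) (le_of_eq (hreg _))
  · exact le_trans (ncard_inS E _ _) (le_of_eq (hreg _))
  · exact le_trans (ncard_inS E _ _) (le_of_eq (hreg _))
  · exact le_trans (ncard_inS E _ _) (le_of_eq (hreg _))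
  · exact le_trans (ncard_outS E _ _) (le_of_eq (hreg _))
  · exact le_trans (ncard_outS E _ _) (le_of_eq (hreg _))
  · exact le_trans (ncard_outS E _ _) (le_of_eq (hreg _))
  · exact le_trans (ncard_outS E _ _) (le_of_eq (hreg _))
  · simp

lemma aA_empty (e₀ : Arc E) (m : ℕ)
    (h : m ∉ ([3,8,9,14,18,23,24,29] : List ℕ)) : aA E e₀ m = ∅ := by
  simp only [List.mem_cons, List.not_mem_nil, or_false] at h
  push_neg at h
  unfold aA
  split_ifs <;> tauto

lemma ncard_aSupp_le {d : ℕ} (hd : 1 ≤ d) (hreg : IsRegularDeg E d)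
    (e₀ : Arc E) (m : ℕ) (h1 : 1 ≤ m) (h2 : m ≤ 31) :
    (aSupp E f e₀ m).ncard ≤ d + 3 := by
  have hG : (aV e₀ '' ↑(gadgetNbrs m)).ncard ≤ (gadgetNbrs m).card := by
    calc (aV e₀ '' ↑(gadgetNbrs m)).ncard ≤ (↑(gadgetNbrs m) : Set ℕ).ncard :=
          Set.ncard_image_le (Set.toFinite _)
      _ = (gadgetNbrs m).card := Set.ncard_coe_finset _
  have hB := ncard_aB_le E f e₀ m
  have hU1 := Set.ncard_union_le ((aV e₀ '' ↑(gadgetNbrs m)) ∪ aB E f e₀ m) (aA E e₀ m)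
  have hU2 := Set.ncard_union_le (aV e₀ '' ↑(gadgetNbrs m)) (aB E f e₀ m)
  by_cases harc : m ∈ ([3,8,9,14,18,23,24,29] : List ℕ)
  · have hG2 := gadgetNbrs_card_arc m harc
    have hA := ncard_aA_le E hreg e₀ m
    unfold aSupp
    omega
  · have hG3 := gadgetNbrs_card_all m (by omega)
    have hA : (aA E e₀ m).ncard = 0 := by rw [aA_empty E e₀ m harc]; simp
    unfold aSupp
    omega

lemma ncard_bSupp_le {d : ℕ} (hreg : IsRegularDeg E d) (v : V) (c : ℕ) :
    (bSupp E v c).ncard ≤ d + 2 := by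
  have hL : (bLoc E v c).ncard ≤ 2 := by
    unfold bLoc
    split_ifs
    · simp
    · exact le_trans (Set.ncard_insert_le _ _) (by simp)
    · simp
    · simp
    · exact le_trans (Set.ncard_insert_le _ _) (by simp)
    · simp
  have hA : (bArc E v c).ncard ≤ d := by
    unfold bArc
    split_ifs
    · exact le_trans (ncard_outS E _ _) (le_of_eq (hreg _))
    · exact le_trans (ncard_inS E _ _) (le_of_eq (hreg _))
    · exact le_trans (ncard_inS E _ _) (le_of_eq (hreg _))
    · exact le_trans (ncard_outS E _ _) (le_of_eq (hreg _))
    · simp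
  have := Set.ncard_union_le (bLoc E v c) (bArc E v c)
  unfold bSupp
  omega

end AuxStmt6

/-- For `d ≥ 1` and a `d`-regular base graph `E` on `n` vertices, the graph
`G_E` has maximum degree at most `d + 3` and exactly `(6 + 31d)·n` vertices. -/
theorem stmt6 {V : Type*} [Fintype V] [DecidableEq V] (E : SimpleGraph V)
    [DecidableRel E.Adj] (d : ℕ) (hd : 1 ≤ d) (hreg : IsRegularDeg E d)
    (f : Arc E ≃ Fin (Fintype.card (Arc E))) :
    MaxDegLE (GE E f) (d + 3) ∧
      Fintype.card (GEVert E) = (6 + 31 * d) * Fintype.card V := by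
  constructor
  · intro x
    have hsub : (GE E f).neighborSet x ⊆ supp E f x := by
      intro y hy
      have hy' : x ≠ y ∧ (GERel E f x y ∨ GERel E f y x) :=
        (SimpleGraph.fromRel_adj _ _ _).1 hy
      rcases hy'.2 with h | h
      · exact (rel_mem_supp E f h).1
      · exact (rel_mem_supp E f h).2
    refine le_trans (Set.ncard_le_ncard hsub (Set.toFinite _)) ?_
    rcases x with ⟨e₀, i₀⟩ | ⟨v, k⟩
    · exact ncard_aSupp_le E f hd hreg e₀ (i₀.val + 1) (by omega) (by omega)
    · exact le_trans (ncard_bSupp_le E hreg v (k.val + 1)) (by omega)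
  · have hcard : Fintype.card (Arc E) = d * Fintype.card V := by
      let eqv : Arc E ≃ E.Dart :=
        ⟨fun p => ⟨p.1, p.2⟩, fun dd => ⟨dd.toProd, dd.adj⟩, fun _ => rfl, fun _ => rfl⟩
      rw [Fintype.card_congr eqv, SimpleGraph.dart_card_eq_sum_degrees]
      have hdeg : ∀ v : V, E.degree v = d := by
        intro v
        have hv := hreg v
        rw [Set.ncard_eq_toFinset_card'] at hv
        simpa [SimpleGraph.degree, SimpleGraph.neighborFinset] using hv
      rw [Finset.sum_congr rfl (fun v _ => hdeg v), Finset.sum_const, smul_eq_mul, mul_comm,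
        Finset.card_univ]
    simp only [GEVert, Fintype.card_sum, Fintype.card_prod, Fintype.card_fin, hcard]
    ring
end

section
/- Let d ≥ 1 and let E be a d-regular graph on n vertices. Then G_E contains a cycle of length 31·d·n, namely the cycle that traverses, for i = 1,...,|E(→E)| in the order given by f, the vertices a_1^{f^{-1}(i)}, a_2^{f^{-1}(i)}, ..., a_31^{f^{-1}(i)} and then proceeds to a_1^{f^{-1}(i+1)} (cyclically); this cycle visits exactly the vertices {a_j^e : e ∈ E(→E), 1 ≤ j ≤ 31} and omits the 6n vertices b_1^v,...,b_6^v. -/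
open SimpleGraph

variable {V : Type*}

/-!
The `a`-vertices, listed arc by arc in the order `f` and inside each gadget as `a_1, …, a_31`,
are `31 · |E(→E)| = 31 d n ≥ 3` distinct vertices in which cyclically consecutive ones are
adjacent in `G_E`: by the path edge `a_j a_{j+1}` of a gadget, or by the edge `a_31^e a_1^{e'}`
between `f`-consecutive arcs. Such a sequence is an injective image of the cycle graph on
`31 d n` vertices, so it traces a cycle, which never meets a `b`-vertex.
-/

namespace Fin

variable {m n : ℕ} [NeZero (m * n)]

theorem finProdFinEquiv_add_one_of_lt (i : Fin m) (j : Fin n) (h : (j : ℕ) + 1 < n) :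
    finProdFinEquiv (i, j) + 1 = finProdFinEquiv (i, ⟨j + 1, h⟩) := by
  have hi := i.isLt
  have hlt : (j : ℕ) + n * i + 1 < m * n := by nlinarith
  ext
  simp only [val_add, val_one', Nat.add_mod_mod, finProdFinEquiv_apply_val]
  rw [Nat.mod_eq_of_lt hlt]
  omega

theorem finProdFinEquiv_add_one_of_eq (i : Fin m) (j : Fin n) (h : (j : ℕ) + 1 = n) :
    finProdFinEquiv (i, j) + 1 =
      finProdFinEquiv (⟨(i + 1) % m, Nat.mod_lt _ i.pos⟩, ⟨0, j.pos⟩) := by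
  ext
  rw [val_add, val_one', Nat.add_mod_mod]
  simp only [finProdFinEquiv_apply_val, zero_add]
  rw [add_right_comm, h, add_comm n, ← Nat.mul_add_one, mul_comm m, Nat.mul_mod_mul_left]

end Fin

namespace SimpleGraph

variable {W : Type*} {G : SimpleGraph W}

theorem exists_isCycle_of_injective_of_adj_add_one {N : ℕ} [NeZero N] (hN : 3 ≤ N)
    (c : Fin N → W) (hc : Function.Injective c) (hadj : ∀ i, G.Adj (c i) (c (i + 1))) :
    ∃ C : G.Walk (c 0) (c 0), C.IsCycle ∧ C.length = N ∧
      (∀ i : Fin N, C.getVert i = c i) ∧ ∀ y, y ∈ C.support ↔ y ∈ Set.range c := by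
  obtain ⟨n, rfl⟩ := Nat.exists_eq_add_of_le' hN
  let φ : cycleGraph (n + 3) →g G := ⟨c, fun {a b} h => by
    rcases cycleGraph_adj.mp h with hab | hab
    · rw [sub_eq_iff_eq_add] at hab
      rw [hab, add_comm]; exact (hadj b).symm
    · rw [sub_eq_iff_eq_add] at hab
      rw [hab, add_comm]; exact hadj a⟩
  -- `cycleGraph.cycle n` visits `0, n + 2, n + 1, …, 1, 0`, hence the reversal.
  have hget (i : Fin (n + 3)) : (cycleGraph.cycle n).reverse.getVert i = i := by
    rw [Walk.getVert_reverse, cycleGraph.length_cycle, cycleGraph.getVert_cycle (by omega)]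
    ext
    rw [Fin.val_mk, Nat.mod_eq_of_lt (by omega)]
    omega
  refine ⟨(cycleGraph.cycle n).reverse.map φ,
    (Walk.isCycle_map_iff_of_injective hc).mpr cycleGraph.isCycle_cycle.reverse, by simp,
    fun i => by rw [Walk.getVert_map, hget]; rfl, fun y => ?_⟩
  rw [Walk.support_map, List.mem_map]
  constructor
  · rintro ⟨i, -, rfl⟩
    exact ⟨i, rfl⟩
  · rintro ⟨i, rfl⟩
    exact ⟨i, hget i ▸ Walk.getVert_mem_support _ _, rfl⟩

end SimpleGraph

section GE

variable {E : SimpleGraph V}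

theorem aV_succ (e : Arc E) (j : Fin 31) : aV e (j + 1) = Sum.inl (e, j) := by
  simp [aV, Nat.mod_eq_of_lt j.isLt]

theorem card_arc_of_isRegularDeg [Fintype V] [DecidableRel E.Adj] {d : ℕ}
    (hreg : IsRegularDeg E d) : Fintype.card (Arc E) = d * Fintype.card V := by
  rw [Fintype.card_congr (Equiv.subtypeProdEquivSigmaSubtype fun v w => E.Adj v w),
    Fintype.card_sigma]
  have hdeg (v : V) : Fintype.card {w // E.Adj v w} = d := by
    rw [← hreg v, ← Nat.card_coe_set_eq, Nat.card_eq_fintype_card]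
    rfl
  simp [hdeg, mul_comm]

variable [Fintype V] [DecidableRel E.Adj] (f : Arc E ≃ Fin (Fintype.card (Arc E)))

theorem GE_adj_aV_add_one (e : Arc E) {j : ℕ} (hj₁ : 1 ≤ j) (hj : j ≤ 30) :
    (GE E f).Adj (aV e j) (aV e (j + 1)) := by
  refine (fromRel_adj _ _ _).mpr
    ⟨?_, Or.inl (Or.inl ⟨e, j, j + 1, Or.inl ⟨hj₁, hj, rfl⟩, rfl, rfl⟩)⟩
  simp only [aV, ne_eq, Sum.inl.injEq, Prod.mk.injEq, Fin.mk.injEq, true_and]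
  omega

theorem GE_adj_aV_last_aV_first {e e' : Arc E}
    (h : (f e' : ℕ) = ((f e : ℕ) + 1) % Fintype.card (Arc E)) :
    (GE E f).Adj (aV e 31) (aV e' 1) := by
  refine (fromRel_adj _ _ _).mpr ⟨?_, Or.inl (Or.inr (Or.inl ⟨e, e', h, rfl, rfl⟩))⟩
  simp [aV]

/-- Index `31 * i + j` is the vertex `a_{j+1}^{f⁻¹(i)}`. -/
def aVertexEquiv : Fin (Fintype.card (Arc E) * 31) ≃ Arc E × Fin 31 :=
  finProdFinEquiv.symm.trans (f.symm.prodCongr (Equiv.refl _))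

theorem aVertexEquiv_finProdFinEquiv (i : Fin (Fintype.card (Arc E))) (j : Fin 31) :
    aVertexEquiv f (finProdFinEquiv (i, j)) = (f.symm i, j) := by
  simp [aVertexEquiv]

theorem GE_adj_aVertexEquiv_add_one [NeZero (Fintype.card (Arc E) * 31)]
    (k : Fin (Fintype.card (Arc E) * 31)) :
    (GE E f).Adj (Sum.inl (aVertexEquiv f k)) (Sum.inl (aVertexEquiv f (k + 1))) := by
  obtain ⟨⟨i, j⟩, rfl⟩ := finProdFinEquiv.surjective k
  rcases Nat.lt_or_ge ((j : ℕ) + 1) 31 with hj | hj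
  · rw [Fin.finProdFinEquiv_add_one_of_lt i j hj, aVertexEquiv_finProdFinEquiv,
      aVertexEquiv_finProdFinEquiv, ← aV_succ, ← aV_succ]
    exact GE_adj_aV_add_one f _ (by omega) (by omega)
  · have hlast : (j : ℕ) + 1 = 31 := by omega
    rw [Fin.finProdFinEquiv_add_one_of_eq i j hlast, aVertexEquiv_finProdFinEquiv,
      aVertexEquiv_finProdFinEquiv, ← aV_succ, ← aV_succ, hlast]
    exact GE_adj_aV_last_aV_first f (by simp)

end GE

theorem stmt7_general {V : Type*} [Fintype V] [Nonempty V] (E : SimpleGraph V)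
    [DecidableRel E.Adj] (d : ℕ) (hd : 1 ≤ d) (hreg : IsRegularDeg E d)
    (f : Arc E ≃ Fin (Fintype.card (Arc E))) :
    ∃ (x : GEVert E) (C : (GE E f).Walk x x), C.IsCycle ∧
      C.length = 31 * d * Fintype.card V ∧
      (∀ (i : Fin (Fintype.card (Arc E))) (j : ℕ), j < 31 →
        C.getVert (31 * (i : ℕ) + j) = aV (f.symm i) (j + 1)) ∧
      (∀ y : GEVert E, y ∈ C.support ↔ ∃ p : Arc E × Fin 31, y = Sum.inl p) := by
  have hcard := card_arc_of_isRegularDeg hreg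
  have hpos : 0 < Fintype.card (Arc E) := hcard ▸ Nat.mul_pos hd Fintype.card_pos
  have : NeZero (Fintype.card (Arc E) * 31) := ⟨by positivity⟩
  obtain ⟨C, hcycle, hlen, hget, hsupp⟩ :=
    exists_isCycle_of_injective_of_adj_add_one (by omega) (Sum.inl ∘ aVertexEquiv f)
      (Sum.inl_injective.comp (aVertexEquiv f).injective) (GE_adj_aVertexEquiv_add_one f)
  refine ⟨_, C, hcycle, by rw [hlen, hcard]; ring, fun i j hj => ?_, fun y => ?_⟩
  · have := hget (finProdFinEquiv (i, ⟨j, hj⟩))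
    rw [finProdFinEquiv_apply_val, add_comm] at this
    rw [this, Function.comp_apply, aVertexEquiv_finProdFinEquiv, ← aV_succ]
  · rw [hsupp, Set.range_comp, (aVertexEquiv f).range_eq_univ, Set.image_univ, Set.mem_range]
    exact exists_congr fun _ => eq_comm

/-- For `d ≥ 1` and a `d`-regular base graph `E` on `n ≥ 1` vertices, `G_E`
contains a cycle of length `31·d·n` which, for `i = 0, 1, …` in the cyclic order given by `f`,
traverses the vertices `a_1^{f⁻¹(i)}, a_2^{f⁻¹(i)}, …, a_31^{f⁻¹(i)}` and then proceeds to
`a_1^{f⁻¹(i+1)}`; it visits exactly the `a`-vertices and omits the `6n` `b`-vertices. -/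
theorem stmt7 {V : Type*} [Fintype V] [DecidableEq V] [Nonempty V] (E : SimpleGraph V)
    [DecidableRel E.Adj] (d : ℕ) (hd : 1 ≤ d) (hreg : IsRegularDeg E d)
    (f : Arc E ≃ Fin (Fintype.card (Arc E))) :
    ∃ (x : GEVert E) (C : (GE E f).Walk x x), C.IsCycle ∧
      C.length = 31 * d * Fintype.card V ∧
      (∀ (i : Fin (Fintype.card (Arc E))) (j : ℕ), j < 31 →
        C.getVert (31 * (i : ℕ) + j) = aV (f.symm i) (j + 1)) ∧
      (∀ y : GEVert E, y ∈ C.support ↔ ∃ p : Arc E × Fin 31, y = Sum.inl p) :=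
  stmt7_general E d hd hreg f
end

section
/- Let E be a d-regular graph with expansion ratio h(E) ≥ 1 and let S' = {s'_1,...,s'_m} ⊆ V(E) be a set with m ≤ |V(E)|/2. Then there exist pairwise edge-disjoint paths Q_1,...,Q_m in E such that for each i ∈ [m], Q_i = (q_i^1,...,q_i^{ℓ_i}) for some ℓ_i ∈ ℕ with q_i^{ℓ_i} = s'_i, q_i^j ∈ S' for all j > 1, and q_i^1 ∈ V(E) \ S'. -/
/-!
The paths are read off a unit flow. Call a set `D` of arcs a partial orientation of `E` if each
arc is an edge of `E` and no edge carries both of its arcs; the excess of a vertex is its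
in-degree minus its out-degree in `D`. We find such a `D` in which every vertex of `S'` has
excess exactly `1`, adding one vertex of `S'` at a time by augmenting along residual paths as in
Ford–Fulkerson. If no residual path from outside `S'` reaches a vertex `s` of excess `0`, the set
`X` of vertices that do reach `s` lies inside `S'`, and every edge leaving `X` is an arc into `X`.
By expansion there are at least `|X|` such arcs, so the excess summed over `X` is at least `|X|`.
It is also at most `|X| - 1`, because `s` contributes `0`.

Removing the arcs one by one then splits `D` into arc-disjoint paths that start outside `S'`, stay
in `S'` afterwards, and include exactly one path ending at each vertex of `S'`. These paths are
edge-disjoint because `D` never contains both orientations of an edge.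
-/

open SimpleGraph

variable {V : Type*}

/-- The list of edges (as unordered pairs) of a list of vertices. -/
def listEdges {α : Type*} (L : List α) : List (Sym2 α) :=
  (L.zip L.tail).map fun p => s(p.1, p.2)


namespace List

variable {α : Type*}

def arcs (l : List α) : List (α × α) := l.zip l.tail

theorem arcs_append_singleton {l : List α} {a : α} (b : α) (ha : l.getLast? = some a) :
    (l ++ [b]).arcs = l.arcs ++ [(a, b)] := by
  induction l with
  | nil => simp at ha
  | cons x t ih =>
    cases t with
    | nil => simp_all [arcs]
    | cons y t =>
      rw [getLast?_cons_cons] at ha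
      simpa [arcs] using ih ha

theorem isChain_iff_forall_mem_arcs {R : α → α → Prop} {l : List α} :
    l.IsChain R ↔ ∀ p ∈ l.arcs, R p.1 p.2 := by
  induction l with
  | nil => simp [arcs]
  | cons x t ih =>
    cases t with
    | nil => simp [arcs]
    | cons y t => simp_all [arcs, isChain_cons_cons]

theorem exists_nodup_isChain_cons_of_relationReflTransGen {r : α → α → Prop} {a b : α}
    (h : Relation.ReflTransGen r a b) :
    ∃ l, (a :: l).Nodup ∧ (a :: l).IsChain r ∧ (a :: l).getLast (cons_ne_nil _ _) = b := by
  induction h using Relation.ReflTransGen.head_induction_on with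
  | refl => exact ⟨[], nodup_singleton _, isChain_singleton _, rfl⟩
  | @head a c hac _ ih =>
    obtain ⟨l, hnd, hch, hlast⟩ := ih
    by_cases ha : a ∈ c :: l
    · -- shortcut the cycle through `a`
      obtain ⟨l₁, l₂, hsplit⟩ := append_of_mem ha
      rw [hsplit] at hnd hch
      refine ⟨l₂, hnd.sublist (sublist_append_right _ _), hch.suffix (suffix_append _ _), ?_⟩
      rw [← hlast]
      simp only [hsplit, getLast_append_of_ne_nil _ (cons_ne_nil _ _)]
    · exact ⟨c :: l, nodup_cons.2 ⟨ha, hnd⟩, isChain_cons_cons.2 ⟨hac, hch⟩, hlast⟩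

end List

section Excess

variable {α : Type*} [DecidableEq α]

def excess (D : Finset (α × α)) (x : α) : ℤ :=
  ∑ p ∈ D, ((if p.2 = x then 1 else 0) - (if p.1 = x then 1 else 0))

theorem excess_insert {D : Finset (α × α)} {p : α × α} (hp : p ∉ D) (x : α) :
    excess (insert p D) x =
      excess D x + (if p.2 = x then 1 else 0) - (if p.1 = x then 1 else 0) := by
  rw [excess, Finset.sum_insert hp, excess]; ring

theorem excess_erase {D : Finset (α × α)} {p : α × α} (hp : p ∈ D) (x : α) :
    excess (D.erase p) x =
      excess D x - (if p.2 = x then 1 else 0) + (if p.1 = x then 1 else 0) := by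
  rw [excess, Finset.sum_erase_eq_sub hp, excess]; ring

theorem sum_excess (D : Finset (α × α)) (X : Finset α) :
    ∑ x ∈ X, excess D x =
      ∑ p ∈ D, ((if p.2 ∈ X then 1 else 0) - (if p.1 ∈ X then 1 else 0)) := by
  simp only [excess]
  rw [Finset.sum_comm]
  refine Finset.sum_congr rfl fun p _ => ?_
  rw [Finset.sum_sub_distrib, Finset.sum_ite_eq, Finset.sum_ite_eq]

theorem exists_mem_of_excess_pos {D : Finset (α × α)} {x : α} (h : 0 < excess D x) :
    ∃ u, (u, x) ∈ D := by
  by_contra! hnone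
  refine h.not_ge (Finset.sum_nonpos fun p hp => ?_)
  have : p.2 ≠ x := by rintro rfl; exact hnone p.1 hp
  simp only [if_neg this]
  split_ifs <;> norm_num

end Excess

section Feeders

structure IsFeeder (S : Finset V) (D : Finset (V × V)) (P : List V) : Prop where
  head_notMem : ∃ x, P.head? = some x ∧ x ∉ S
  tail_subset : ∀ x ∈ P.tail, x ∈ S
  arcs_subset : ∀ p ∈ P.arcs, p ∈ D

variable {S : Finset V} {D : Finset (V × V)} {P : List V} {u s : V}

theorem IsFeeder.mono {D' : Finset (V × V)} (h : IsFeeder S D P) (hD : D ⊆ D') :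
    IsFeeder S D' P :=
  ⟨h.head_notMem, h.tail_subset, fun p hp => hD (h.arcs_subset p hp)⟩

theorem IsFeeder.append_singleton (h : IsFeeder S D P) (hP : P.getLast? = some u)
    (hs : s ∈ S) (hus : (u, s) ∈ D) : IsFeeder S D (P ++ [s]) := by
  have hne : P ≠ [] := by rintro rfl; simp at hP
  refine ⟨?_, ?_, ?_⟩
  · obtain ⟨x, hx, hxS⟩ := h.head_notMem
    exact ⟨x, by simp [List.head?_append, hx], hxS⟩
  · simp only [List.tail_append_of_ne_nil hne, List.mem_append, List.mem_singleton]
    rintro x (hx | rfl)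
    exacts [h.tail_subset x hx, hs]
  · simp only [List.arcs_append_singleton s hP, List.mem_append, List.mem_singleton]
    rintro p (hp | rfl)
    exacts [h.arcs_subset p hp, hus]

variable [DecidableEq V]

def endCount (Ps : Multiset (List V)) (v : V) : ℕ :=
  Ps.countP (·.getLast? = some v)

structure IsFeederFamily (S : Finset V) (D : Finset (V × V)) (Ps : Multiset (List V)) :
    Prop where
  isFeeder : ∀ P ∈ Ps, IsFeeder S D P
  nodup_arcs : (Ps.bind fun P => (P.arcs : Multiset (V × V))).Nodup
  endCount_eq : ∀ v ∈ S, (endCount Ps v : ℤ) = excess D v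

variable {Ps : Multiset (List V)}

theorem IsFeederFamily.cons_singleton (h : IsFeederFamily S D Ps) (hu : u ∉ S) :
    IsFeederFamily S D ([u] ::ₘ Ps) := by
  refine ⟨?_, ?_, fun v hv => ?_⟩
  · simp only [Multiset.mem_cons]
    rintro P (rfl | hP)
    exacts [⟨⟨u, rfl, hu⟩, by simp, by simp [List.arcs]⟩, h.isFeeder P hP]
  · simpa [List.arcs] using h.nodup_arcs
  · have huv : u ≠ v := by rintro rfl; exact hu hv
    simpa [endCount, huv] using h.endCount_eq v hv

theorem IsFeederFamily.extend (h : IsFeederFamily S (D.erase (u, s)) (P ::ₘ Ps))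
    (hP : P.getLast? = some u) (hs : s ∈ S) (hus : (u, s) ∈ D) :
    IsFeederFamily S D ((P ++ [s]) ::ₘ Ps) := by
  have hfeeder : ∀ Q ∈ P ::ₘ Ps, IsFeeder S D Q := fun Q hQ =>
    (h.isFeeder Q hQ).mono (Finset.erase_subset _ _)
  refine ⟨?_, ?_, fun v hv => ?_⟩
  · simp only [Multiset.mem_cons]
    rintro Q (rfl | hQ)
    · exact (hfeeder P (Multiset.mem_cons_self _ _)).append_singleton hP hs hus
    · exact hfeeder Q (Multiset.mem_cons_of_mem hQ)
  · have hfresh : (u, s) ∉ (P ::ₘ Ps).bind fun Q => (Q.arcs : Multiset (V × V)) := by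
      simp only [Multiset.mem_bind, Multiset.mem_coe, not_exists, not_and]
      intro Q hQ hmem
      simpa using (h.isFeeder Q hQ).arcs_subset _ hmem
    have hbind : (((P ++ [s]) ::ₘ Ps).bind fun Q => (Q.arcs : Multiset (V × V))) =
        (u, s) ::ₘ (P ::ₘ Ps).bind fun Q => (Q.arcs : Multiset (V × V)) := by
      rw [Multiset.cons_bind, Multiset.cons_bind, List.arcs_append_singleton s hP,
        ← Multiset.coe_add, Multiset.coe_singleton, add_right_comm, add_comm,
        Multiset.singleton_add]
    rw [hbind]
    exact Multiset.nodup_cons.2 ⟨hfresh, h.nodup_arcs⟩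
  · have := h.endCount_eq v hv
    simp only [endCount, Multiset.countP_cons, List.getLast?_concat, hP, Option.some.injEq]
      at this ⊢
    rw [excess_erase hus] at this
    push_cast at this ⊢
    split_ifs at this ⊢ <;> linarith

theorem exists_isFeederFamily (hpos : ∀ v ∈ S, 0 ≤ excess D v) :
    ∃ Ps, IsFeederFamily S D Ps := by
  induction D using Finset.strongInduction with
  | H D ih =>
    by_cases hzero : ∀ v ∈ S, excess D v = 0
    · exact ⟨0, by simp, by simp, fun v hv => by simp [endCount, hzero v hv]⟩
    push Not at hzero
    obtain ⟨s, hs, hs0⟩ := hzero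
    obtain ⟨u, hus⟩ := exists_mem_of_excess_pos (lt_of_le_of_ne (hpos s hs) (Ne.symm hs0))
    have hexc := excess_erase hus
    have hdrop : ∀ v ∈ S, (if s = v then 1 else 0) ≤ excess D v := fun v hv => by
      split_ifs with hsv
      · subst hsv; have := hpos s hs; omega
      · exact hpos v hv
    obtain ⟨Ps, hPs⟩ := ih _ (Finset.erase_ssubset hus) fun v hv => by
      have := hdrop v hv
      rw [hexc]
      split_ifs at this ⊢ <;> linarith
    -- the removed arc `(u, s)` extends a path ending at `u`, or starts a new one if `u ∉ S`
    obtain ⟨P, Ps', hfam, hP⟩ : ∃ P Ps', IsFeederFamily S (D.erase (u, s)) (P ::ₘ Ps') ∧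
        P.getLast? = some u := by
      by_cases hu : u ∈ S
      · have hcount : 0 < endCount Ps u := by
          have hcount := hPs.endCount_eq u hu
          have := hdrop u hu
          rw [hexc, if_pos rfl] at hcount
          split_ifs at this hcount <;> omega
        obtain ⟨P, hP, hPu⟩ := Multiset.countP_pos.1 hcount
        obtain ⟨Ps', rfl⟩ := Multiset.exists_cons_of_mem hP
        exact ⟨P, Ps', hPs, hPu⟩
      · exact ⟨[u], Ps, hPs.cons_singleton hu, rfl⟩
    exact ⟨_, hfam.extend hP hs hus⟩

theorem IsFeederFamily.disjoint_arcs (h : IsFeederFamily S D Ps) {P' : List V} (hP : P ∈ Ps)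
    (hP' : P' ∈ Ps) (hne : P ≠ P') : ∀ p ∈ P.arcs, p ∉ P'.arcs := by
  obtain ⟨Ps', rfl⟩ := Multiset.exists_cons_of_mem hP
  have hdisj := (Multiset.nodup_add.1 (Multiset.cons_bind P Ps' _ ▸ h.nodup_arcs)).2.2
  intro p hp hp'
  exact Multiset.disjoint_left.1 hdisj (Multiset.mem_coe.2 hp)
    (Multiset.mem_bind.2 ⟨P', (Multiset.mem_cons.1 hP').resolve_left hne.symm, hp'⟩)

end Feeders

namespace SimpleGraph

variable [DecidableEq V] (E : SimpleGraph V)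

structure IsPartialOrientation (D : Finset (V × V)) : Prop where
  adj : ∀ p ∈ D, E.Adj p.1 p.2
  swap_notMem : ∀ p ∈ D, p.swap ∉ D

def Residual (D : Finset (V × V)) (v w : V) : Prop :=
  (w, v) ∈ D ∨ (E.Adj v w ∧ (v, w) ∉ D)

def flipArc (D : Finset (V × V)) (v w : V) : Finset (V × V) :=
  if (w, v) ∈ D then D.erase (w, v) else insert (v, w) D

variable {E} {D : Finset (V × V)} {v w : V}

theorem IsPartialOrientation.flipArc (hD : E.IsPartialOrientation D) (h : E.Residual D v w) :
    E.IsPartialOrientation (flipArc D v w) := by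
  by_cases hwv : (w, v) ∈ D
  · rw [SimpleGraph.flipArc, if_pos hwv]
    exact ⟨fun p hp => hD.adj p (Finset.mem_of_mem_erase hp),
      fun p hp hp' =>
        hD.swap_notMem p (Finset.mem_of_mem_erase hp) (Finset.mem_of_mem_erase hp')⟩
  · rw [SimpleGraph.flipArc, if_neg hwv]
    have hvw : E.Adj v w := (h.resolve_left hwv).1
    refine ⟨?_, ?_⟩
    · simp only [Finset.mem_insert]
      rintro p (rfl | hp)
      exacts [hvw, hD.adj p hp]
    · rintro ⟨x, y⟩ hp hp'
      simp only [Finset.mem_insert, Prod.swap_prod_mk, Prod.mk.injEq] at hp hp'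
      rcases hp with ⟨rfl, rfl⟩ | hp
      · rcases hp' with ⟨rfl, -⟩ | hp'
        exacts [hvw.ne rfl, hwv hp']
      · rcases hp' with ⟨rfl, rfl⟩ | hp'
        exacts [hwv hp, hD.swap_notMem _ hp hp']

theorem excess_flipArc (h : E.Residual D v w) (x : V) :
    excess (flipArc D v w) x =
      excess D x + (if w = x then 1 else 0) - (if v = x then 1 else 0) := by
  by_cases hwv : (w, v) ∈ D
  · rw [flipArc, if_pos hwv, excess_erase hwv]; ring
  · rw [flipArc, if_neg hwv]
    exact excess_insert (h.resolve_left hwv).2 x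

theorem residual_flipArc_iff {a b : V} (ha : a ≠ v) (hb : b ≠ v) :
    E.Residual (flipArc D v w) a b ↔ E.Residual D a b := by
  have key : ∀ x y, x ≠ v → y ≠ v → ((x, y) ∈ flipArc D v w ↔ (x, y) ∈ D) := by
    intro x y hx hy
    unfold flipArc
    split_ifs <;> simp [hx, hy]
  simp only [Residual, key a b ha hb, key b a hb ha]

theorem exists_shift_excess (hD : E.IsPartialOrientation D) {a b : V}
    (h : Relation.ReflTransGen (E.Residual D) a b) :
    ∃ D', E.IsPartialOrientation D' ∧
      ∀ x, excess D' x = excess D x + (if b = x then 1 else 0) - (if a = x then 1 else 0) := by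
  obtain ⟨l, hnd, hch, rfl⟩ := List.exists_nodup_isChain_cons_of_relationReflTransGen h
  clear h
  induction l generalizing a D with
  | nil => exact ⟨D, hD, fun x => by rw [List.getLast_singleton]; ring⟩
  | cons c l ih =>
    obtain ⟨hac, hch⟩ := List.isChain_cons_cons.1 hch
    obtain ⟨ha, hnd⟩ := List.nodup_cons.1 hnd
    -- `a` does not occur later on the path, so flipping its arc keeps the rest residual
    have hch' : (c :: l).IsChain (E.Residual (flipArc D a c)) :=
      hch.imp_of_mem_imp fun x y hx hy hxy =>
        (residual_flipArc_iff (by rintro rfl; exact ha hx) (by rintro rfl; exact ha hy)).2 hxy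
    obtain ⟨D', hD', hexc⟩ := ih (hD.flipArc hac) hnd hch'
    refine ⟨D', hD', fun x => ?_⟩
    rw [hexc, excess_flipArc hac, List.getLast_cons_cons]
    ring

theorem IsPartialOrientation.exists_edgeDisjoint_feeders (hD : E.IsPartialOrientation D)
    {S : Finset V} (hS : ∀ v ∈ S, excess D v = 1) :
    ∃ Q : {s : V // s ∈ S} → List V,
      (∀ s, (Q s).IsChain E.Adj) ∧
      (∀ s, ∃ x : V, (Q s).head? = some x ∧ x ∉ S) ∧
      (∀ s, (Q s).getLast? = some s.1) ∧
      (∀ s, ∀ x ∈ (Q s).tail, x ∈ S) ∧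
      (∀ s t, s ≠ t → ∀ p ∈ listEdges (Q s), p ∉ listEdges (Q t)) := by
  obtain ⟨Ps, hPs⟩ := exists_isFeederFamily (S := S) (D := D) fun v hv => by simp [hS v hv]
  have hends : ∀ s : {s : V // s ∈ S}, ∃ P ∈ Ps, P.getLast? = some s.1 := fun s => by
    have := hPs.endCount_eq s.1 s.2
    rw [hS s.1 s.2] at this
    exact Multiset.countP_pos.1 (by unfold endCount at this; omega)
  choose Q hQ hQlast using hends
  have hfeeder := fun s => hPs.isFeeder _ (hQ s)
  refine ⟨Q, fun s => List.isChain_iff_forall_mem_arcs.2 fun p hp =>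
      hD.adj p ((hfeeder s).arcs_subset p hp),
    fun s => (hfeeder s).head_notMem, hQlast, fun s => (hfeeder s).tail_subset, ?_⟩
  intro s t hst e hes het
  have hne : Q s ≠ Q t := fun h => hst (Subtype.ext (Option.some_injective _ (by
    rw [← hQlast, ← hQlast, h])))
  obtain ⟨a, ha, rfl⟩ := List.mem_map.1 hes
  obtain ⟨b, hb, hab⟩ := List.mem_map.1 het
  rcases Sym2.eq_iff.1 hab with ⟨h1, h2⟩ | ⟨h1, h2⟩
  · exact hPs.disjoint_arcs (hQ s) (hQ t) hne a ha (Prod.ext h1 h2 ▸ hb)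
  · exact hD.swap_notMem a ((hfeeder s).arcs_subset a ha)
      ((Prod.ext h1 h2 : b = a.swap) ▸ (hfeeder t).arcs_subset b hb)

variable [Fintype V]

theorem card_le_sum_excess (hexp : ExpansionGeOne E) {X : Finset V} (hX : X.Nonempty)
    (hXcard : 2 * X.card ≤ Fintype.card V) (hclosed : ∀ p ∈ D, p.1 ∈ X → p.2 ∈ X)
    (hbdry : ∀ x ∈ X, ∀ y ∉ X, E.Adj x y → (y, x) ∈ D) :
    (X.card : ℤ) ≤ ∑ x ∈ X, excess D x := by
  set inArcs := D.filter fun p => p.2 ∈ X ∧ p.1 ∉ X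
  have hbdry_sub : {e : Sym2 V | e ∈ E.edgeSet ∧ ∃ x ∈ (X : Set V), ∃ y, y ∉ (X : Set V) ∧
      e = s(x, y)} ⊆ ↑(inArcs.image fun p => s(p.1, p.2)) := by
    rintro _ ⟨hadj, x, hx, y, hy, rfl⟩
    rw [Finset.mem_coe] at hx hy
    exact Finset.mem_image.2 ⟨(y, x), Finset.mem_filter.2 ⟨hbdry x hx y hy hadj, hx, hy⟩,
      Sym2.eq_swap⟩
  have hcard : X.card ≤ inArcs.card :=
    calc X.card = (X : Set V).ncard := (Set.ncard_coe_finset X).symm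
      _ ≤ _ := hexp _ (by simpa using hX) (by rwa [Set.ncard_coe_finset])
      _ ≤ (↑(inArcs.image fun p => s(p.1, p.2)) : Set (Sym2 V)).ncard :=
        Set.ncard_le_ncard hbdry_sub (Finset.finite_toSet _)
      _ = (inArcs.image fun p => s(p.1, p.2)).card := Set.ncard_coe_finset _
      _ ≤ inArcs.card := Finset.card_image_le
  calc (X.card : ℤ) ≤ inArcs.card := by exact_mod_cast hcard
    _ = ∑ p ∈ D, if p.2 ∈ X ∧ p.1 ∉ X then 1 else 0 := by
      rw [Finset.card_filter]; push_cast; rfl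
    _ ≤ ∑ x ∈ X, excess D x := by
      rw [sum_excess]
      refine Finset.sum_le_sum fun p hp => ?_
      have := hclosed p hp
      split_ifs <;> simp_all

theorem exists_augment (hexp : ExpansionGeOne E) {S : Finset V}
    (hS : 2 * S.card ≤ Fintype.card V) (hD : E.IsPartialOrientation D)
    (hle : ∀ v ∈ S, excess D v ≤ 1) {s : V} (hs0 : excess D s ≤ 0) :
    ∃ D', E.IsPartialOrientation D' ∧
      ∀ v ∈ S, excess D' v = excess D v + if s = v then 1 else 0 := by
  classical
  by_cases hout : ∃ u ∉ S, Relation.ReflTransGen (E.Residual D) u s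
  · obtain ⟨u, hu, hreach⟩ := hout
    obtain ⟨D', hD', hexc⟩ := exists_shift_excess hD hreach
    refine ⟨D', hD', fun v hv => ?_⟩
    rw [hexc, if_neg (show u ≠ v by rintro rfl; exact hu hv)]
    ring
  -- otherwise the vertices that can reach `s` form a set violating the expansion bound
  push Not at hout
  exfalso
  set X := Finset.univ.filter fun v => Relation.ReflTransGen (E.Residual D) v s
  have hmem : ∀ v, v ∈ X ↔ Relation.ReflTransGen (E.Residual D) v s := by simp [X]
  have hXS : X ⊆ S := fun v hv => by
    by_contra hvS
    exact hout v hvS ((hmem v).1 hv)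
  have hsX : s ∈ X := (hmem s).2 .refl
  have hclosed : ∀ p ∈ D, p.1 ∈ X → p.2 ∈ X := fun p hp h1 =>
    (hmem _).2 (.head (Or.inl hp) ((hmem _).1 h1))
  have hbdry : ∀ x ∈ X, ∀ y ∉ X, E.Adj x y → (y, x) ∈ D := fun x hx y hy hadj => by
    by_contra hyx
    exact hy ((hmem y).2 (.head (Or.inr ⟨hadj.symm, hyx⟩) ((hmem x).1 hx)))
  have hlower := card_le_sum_excess hexp ⟨s, hsX⟩
    ((Nat.mul_le_mul_left 2 (Finset.card_le_card hXS)).trans hS) hclosed hbdry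
  have hupper : ∑ x ∈ X.erase s, excess D x ≤ (X.erase s).card :=
    (Finset.sum_le_card_nsmul _ _ 1 fun x hx => hle x (hXS (Finset.mem_of_mem_erase hx))).trans
      (by simp)
  rw [← Finset.add_sum_erase X _ hsX] at hlower
  rw [Finset.card_erase_of_mem hsX, Nat.cast_sub (Finset.card_pos.2 ⟨s, hsX⟩)] at hupper
  push_cast at hupper
  linarith

theorem exists_excess_eq_one (hexp : ExpansionGeOne E) {S : Finset V}
    (hS : 2 * S.card ≤ Fintype.card V) :
    ∃ D, E.IsPartialOrientation D ∧ ∀ v ∈ S, excess D v = 1 := by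
  suffices h : ∀ R ⊆ S, ∃ D, E.IsPartialOrientation D ∧
      ∀ v ∈ S, excess D v = if v ∈ R then 1 else 0 by
    obtain ⟨D, hD, hexc⟩ := h S subset_rfl
    exact ⟨D, hD, fun v hv => by rw [hexc v hv, if_pos hv]⟩
  intro R
  induction R using Finset.induction_on with
  | empty => exact fun _ => ⟨∅, ⟨by simp, by simp⟩, by simp [excess]⟩
  | insert s R hsR ih =>
    intro hRS
    obtain ⟨hs, hRS⟩ := Finset.insert_subset_iff.1 hRS
    obtain ⟨D, hD, hexc⟩ := ih hRS
    obtain ⟨D', hD', hexc'⟩ := exists_augment hexp hS hD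
      (fun v hv => by rw [hexc v hv]; split_ifs <;> norm_num) (by rw [hexc s hs, if_neg hsR])
    refine ⟨D', hD', fun v hv => ?_⟩
    rw [hexc' v hv, hexc v hv]
    by_cases hvs : v = s
    · subst hvs; simp [hsR]
    · simp [hvs, Ne.symm hvs]

end SimpleGraph

theorem stmt13_general {V : Type*} [Fintype V] [DecidableEq V] (E : SimpleGraph V)
    (hexp : ExpansionGeOne E) (S' : Finset V) (hm : 2 * S'.card ≤ Fintype.card V) :
    ∃ Q : {s : V // s ∈ S'} → List V,
      (∀ s, (Q s).Chain' E.Adj) ∧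
      (∀ s, ∃ x : V, (Q s).head? = some x ∧ x ∉ S') ∧
      (∀ s, (Q s).getLast? = some s.1) ∧
      (∀ s, ∀ x ∈ (Q s).tail, x ∈ S') ∧
      (∀ s t, s ≠ t → ∀ p ∈ listEdges (Q s), p ∉ listEdges (Q t)) := by
  obtain ⟨D, hD, hexc⟩ := E.exists_excess_eq_one hexp hm
  exact hD.exists_edgeDisjoint_feeders hexc

/-- In a `d`-regular graph `E` with expansion ratio at least `1`, for any
set `S' = {s'_1, …, s'_m}` with `m ≤ |V(E)|/2` there are pairwise edge-disjoint paths
`Q_1, …, Q_m` in `E` such that `Q_i` ends in `s'_i`, all of its vertices except the first lie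
in `S'`, and its first vertex lies outside `S'`. -/
theorem stmt13 {V : Type*} [Fintype V] [DecidableEq V] (E : SimpleGraph V)
    (d : ℕ) (hreg : IsRegularDeg E d) (hexp : ExpansionGeOne E)
    (S' : Finset V) (hm : 2 * S'.card ≤ Fintype.card V) :
    ∃ Q : {s : V // s ∈ S'} → List V,
      (∀ s, (Q s).Chain' E.Adj) ∧
      (∀ s, ∃ x : V, (Q s).head? = some x ∧ x ∉ S') ∧
      (∀ s, (Q s).getLast? = some s.1) ∧
      (∀ s, ∀ x ∈ (Q s).tail, x ∈ S') ∧
      (∀ s t, s ≠ t → ∀ p ∈ listEdges (Q s), p ∉ listEdges (Q t)) :=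
  stmt13_general E hexp S' hm
end
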